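/- For every integer D ≥ 2 and every real K > 1, there exists ε_K > 0 such that for all complex numbers g_1, …, g_D with |g_i| < ε_K for each i and every integer n ≥ 0, the sum F_n(g_1,…,g_D) = ∑_{(p_1,…,p_D) ∈ ℕ^D} C^n_{p_1…p_D} ∏_i g_i^{p_i} satisfies |F_n(g_1,…,g_D)| ≤ K^n. -/

import Mathlib

/-!
Since `n / (|p| + n) ≤ 1` and `binom(N, k) tᵏ ≤ (1 + t)ᴺ` for every `t > 0`, the `p`-th term of
`F_n(g)` is at most `((1 + t)ᴰ)ⁿ rᵖ¹⋯rᵖᴰ` as soon as `(1 + t)ᴰ |gᵢ| ≤ r t` for all `i`. Summing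
the `D`-fold geometric series gives `|F_n(g)| ≤ ((1 + t)ᴰ)ⁿ (1 - r)⁻ᴰ`. With `1 < L < K`, first
choose `t` with `(1 + t)ᴰ < L`, then `r` with `(1 - r)⁻ᴰ < K / L`: the bound becomes
`K Lⁿ⁻¹ ≤ Kⁿ` for `n ≥ 1`, while `F_0 = 1`.
-/

/-- The complex number `Cⁿ_{p₁…p_D}`: for `n ≥ 1` this is
`(n/(p₁+⋯+p_D+n)) · ∏_j binom(p₁+⋯+p_D+n, p_j)`; for `n = 0` it is `1` if all
`p_i = 0` and `0` otherwise. -/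
noncomputable def Ccoef (D n : ℕ) (p : Fin D → ℕ) : ℂ :=
  if n = 0 then (if ∀ i, p i = 0 then 1 else 0)
  else (n : ℂ) / ((∑ i, p i : ℕ) + n) * ∏ j, ((∑ i, p i + n).choose (p j) : ℂ)

/-- `F D n g = ∑_{(p₁,…,p_D) ∈ ℕ^D} Cⁿ_{p₁…p_D} ∏_i g_iᵖⁱ`. -/
noncomputable def F (D n : ℕ) (g : Fin D → ℂ) : ℂ :=
  ∑' p : Fin D → ℕ, Ccoef D n p * ∏ i, g i ^ p i

open Finset Filter Topology

theorem choose_mul_pow_le_one_add_pow (m k : ℕ) {t : ℝ} (ht : 0 ≤ t) :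
    (m.choose k : ℝ) * t ^ k ≤ (1 + t) ^ m := by
  rcases le_or_gt k m with hkm | hmk
  · rw [add_comm, add_pow]
    calc (m.choose k : ℝ) * t ^ k = t ^ k * 1 ^ (m - k) * m.choose k := by ring
      _ ≤ ∑ i ∈ range (m + 1), t ^ i * 1 ^ (m - i) * m.choose i :=
        single_le_sum (f := fun i => t ^ i * 1 ^ (m - i) * (m.choose i : ℝ))
          (fun i _ => by positivity) (mem_range_succ_iff.2 hkm)
  · rw [Nat.choose_eq_zero_of_lt hmk, Nat.cast_zero, zero_mul]
    positivity

theorem hasSum_pi_prod {β : Type*} {d : ℕ} {f : Fin d → β → ℝ} {a : Fin d → ℝ}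
    (hf0 : ∀ j b, 0 ≤ f j b) (hf : ∀ j, HasSum (f j) (a j)) :
    HasSum (fun p : Fin d → β => ∏ j, f j (p j)) (∏ j, a j) := by
  induction d with
  | zero => simp
  | succ d ih =>
    have htail : HasSum (fun q : Fin d → β => ∏ j, f j.succ (q j)) (∏ j : Fin d, a j.succ) :=
      ih (fun j => hf0 j.succ) (fun j => hf j.succ)
    have htail0 : 0 ≤ fun q : Fin d → β => ∏ j, f j.succ (q j) :=
      fun q => prod_nonneg fun j _ => hf0 j.succ (q j)
    have hsumm := (hf 0).summable.mul_of_nonneg htail.summable (hf0 0) htail0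
    have hprod := (hf 0).mul htail hsumm
    rw [← (Fin.consEquiv fun _ => β).hasSum_iff, Fin.prod_univ_succ]
    simpa [Function.comp_def, Fin.consEquiv, Fin.prod_univ_succ] using hprod

theorem hasSum_pi_prod_geometric (d : ℕ) {r : ℝ} (hr0 : 0 ≤ r) (hr1 : r < 1) :
    HasSum (fun p : Fin d → ℕ => ∏ j, r ^ p j) ((1 - r)⁻¹ ^ d) := by
  simpa using hasSum_pi_prod (fun _ k => pow_nonneg hr0 k)
    (fun _ : Fin d => hasSum_geometric_of_lt_one hr0 hr1)

theorem exists_pos_one_add_pow_lt (D : ℕ) {c : ℝ} (hc : 1 < c) : ∃ t > 0, (1 + t) ^ D < c := by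
  have hcont : Continuous fun t : ℝ => (1 + t) ^ D := by fun_prop
  have hlim : Tendsto (fun t : ℝ => (1 + t) ^ D) (𝓝[>] 0) (𝓝 1) :=
    (hcont.tendsto' 0 1 (by simp)).mono_left nhdsWithin_le_nhds
  obtain ⟨t, hlt, hpos⟩ := ((hlim.eventually_lt_const hc).and self_mem_nhdsWithin).exists
  exact ⟨t, hpos, hlt⟩

theorem exists_pos_lt_one_inv_one_sub_pow_lt (D : ℕ) {c : ℝ} (hc : 1 < c) :
    ∃ r > 0, r < 1 ∧ (1 - r)⁻¹ ^ D < c := by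
  obtain ⟨t, ht, hlt⟩ := exists_pos_one_add_pow_lt D hc
  refine ⟨t / (1 + t), by positivity, (div_lt_one (by positivity)).2 (by linarith), ?_⟩
  rwa [show (1 - t / (1 + t))⁻¹ = 1 + t by field_simp; ring]

theorem F_zero (D : ℕ) (g : Fin D → ℂ) : F D 0 g = 1 := by
  rw [F, tsum_eq_single 0]
  · simp [Ccoef]
  · intro p hp
    have hp' : ¬∀ i, p i = 0 := fun h => hp (funext h)
    simp [Ccoef, hp']

theorem norm_Ccoef_le (D n : ℕ) (p : Fin D → ℕ) :
    ‖Ccoef D n p‖ ≤ ∏ j, ((∑ i, p i + n).choose (p j) : ℝ) := by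
  unfold Ccoef
  split_ifs with hn hp
  · simp [hp, hn]
  · simp only [norm_zero]
    positivity
  · have hratio : ‖(n : ℂ) / ((∑ i, p i : ℕ) + n)‖ ≤ 1 := by
      rw [norm_div, ← Nat.cast_add, Complex.norm_natCast, Complex.norm_natCast]
      exact div_le_one_of_le₀ (by exact_mod_cast Nat.le_add_left _ _) (by positivity)
    rw [norm_mul, norm_prod]
    simp only [Complex.norm_natCast]
    exact mul_le_of_le_one_left (by positivity) hratio

theorem norm_Ccoef_mul_prod_pow_le {D n : ℕ} {g : Fin D → ℂ} {t r : ℝ} (ht : 0 < t)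
    (hg : ∀ i, (1 + t) ^ D * ‖g i‖ ≤ r * t) (p : Fin D → ℕ) :
    ‖Ccoef D n p * ∏ i, g i ^ p i‖ ≤ ((1 + t) ^ D) ^ n * ∏ j, r ^ p j := by
  set N := ∑ i, p i + n
  calc ‖Ccoef D n p * ∏ i, g i ^ p i‖
      ≤ (∏ j, (N.choose (p j) : ℝ)) * ∏ j, ‖g j‖ ^ p j := by
        rw [norm_mul, norm_prod]
        simp only [norm_pow]
        gcongr
        exact norm_Ccoef_le D n p
    _ = ∏ j, (N.choose (p j) * t ^ p j) * (‖g j‖ / t) ^ p j := by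
        rw [← prod_mul_distrib]
        refine prod_congr rfl fun j _ => ?_
        rw [div_pow]
        field_simp
    _ ≤ ∏ j, (1 + t) ^ N * (‖g j‖ / t) ^ p j := by
        gcongr with j
        exact choose_mul_pow_le_one_add_pow N (p j) ht.le
    _ = ((1 + t) ^ D) ^ n * ∏ j, ((1 + t) ^ D * (‖g j‖ / t)) ^ p j := by
        simp only [prod_mul_distrib, mul_pow, prod_const, card_univ, Fintype.card_fin,
          prod_pow_eq_pow_sum, N, ← pow_mul, ← mul_assoc, ← pow_add, ← mul_sum]
        ring
    _ ≤ ((1 + t) ^ D) ^ n * ∏ j, r ^ p j := by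
        gcongr with j
        rw [← mul_div_assoc, div_le_iff₀ ht]
        exact hg j

theorem norm_F_le {D : ℕ} (n : ℕ) {g : Fin D → ℂ} {t r : ℝ} (ht : 0 < t) (hr0 : 0 ≤ r)
    (hr1 : r < 1) (hg : ∀ i, (1 + t) ^ D * ‖g i‖ ≤ r * t) :
    ‖F D n g‖ ≤ ((1 + t) ^ D) ^ n * (1 - r)⁻¹ ^ D :=
  tsum_of_norm_bounded ((hasSum_pi_prod_geometric D hr0 hr1).mul_left _)
    (norm_Ccoef_mul_prod_pow_le ht hg)

theorem Fn_polynomially_bounded (D : ℕ) (hD : 2 ≤ D) (K : ℝ) (hK : 1 < K) :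
    ∃ εK > 0, εK < ((D : ℝ) - 1) ^ (D - 1) / (D : ℝ) ^ D ∧
      ∀ g : Fin D → ℂ, (∀ i, ‖g i‖ < εK) → ∀ n : ℕ, ‖F D n g‖ ≤ K ^ n := by
  obtain ⟨L, hL1, hLK⟩ := exists_between hK
  obtain ⟨t, ht, hA⟩ := exists_pos_one_add_pow_lt D hL1
  obtain ⟨r, hr0, hr1, hR⟩ :=
    exists_pos_lt_one_inv_one_sub_pow_lt D ((one_lt_div (by linarith)).2 hLK)
  have hM : 0 < ((D : ℝ) - 1) ^ (D - 1) / (D : ℝ) ^ D := by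
    have hD' : (2 : ℝ) ≤ D := by exact_mod_cast hD
    exact div_pos (pow_pos (by linarith) _) (pow_pos (by linarith) _)
  refine ⟨min (r * t / (1 + t) ^ D) (((D : ℝ) - 1) ^ (D - 1) / (D : ℝ) ^ D / 2), by positivity,
    (min_le_right _ _).trans_lt (half_lt_self hM), fun g hg n => ?_⟩
  have hgA : ∀ i, (1 + t) ^ D * ‖g i‖ ≤ r * t := fun i => by
    rw [← le_div_iff₀' (by positivity)]
    exact (hg i).le.trans (min_le_left _ _)
  rcases n with _ | n
  · simp [F_zero]
  calc ‖F D (n + 1) g‖ ≤ ((1 + t) ^ D) ^ (n + 1) * (1 - r)⁻¹ ^ D := norm_F_le _ ht hr0.le hr1 hgA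
    _ ≤ L ^ (n + 1) * (K / L) := by gcongr
    _ = K * L ^ n := by field_simp; ring
    _ ≤ K * K ^ n := by gcongr
    _ = K ^ (n + 1) := by ring
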